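/- For n ≠ 0 and y > 0, the function h(τ) = Γ(1-k, -4πny) e^{2πinτ} (with τ = x+iy) satisfies Δ_k h = 0, where Γ(s,x) = ∫_x^∞ t^{s-1} e^{-t} dt is the incomplete gamma function (here with n < 0 so that -4πny > 0). -/

import Mathlib

open Complex Real

/-- Partial derivative in the `x`-direction of `f : ℂ → ℂ` at `τ`. -/
noncomputable def pdx (f : ℂ → ℂ) (τ : ℂ) : ℂ := fderiv ℝ f τ 1

/-- Partial derivative in the `y`-direction of `f : ℂ → ℂ` at `τ`. -/
noncomputable def pdy (f : ℂ → ℂ) (τ : ℂ) : ℂ := fderiv ℝ f τ Complex.I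

/-- The weight `k` hyperbolic Laplacian
`Δ_k = -y²(∂²/∂x² + ∂²/∂y²) + iky(∂/∂x + i ∂/∂y)`. -/
noncomputable def hypLap (k : ℝ) (f : ℂ → ℂ) (τ : ℂ) : ℂ :=
  -(τ.im : ℂ) ^ 2 * (pdx (pdx f) τ + pdy (pdy f) τ) +
    Complex.I * (k : ℂ) * (τ.im : ℂ) * (pdx f τ + Complex.I * pdy f τ)

/-- The conjugate-linear operator `ξ_k(h) = 2i y^k conj(∂h/∂τ̄)`, where
`∂/∂τ̄ = (1/2)(∂/∂x + i ∂/∂y)`. -/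
noncomputable def xiOp (k : ℝ) (f : ℂ → ℂ) (τ : ℂ) : ℂ :=
  2 * Complex.I * ((τ.im ^ k : ℝ) : ℂ) * (starRingEnd ℂ) ((pdx f τ + Complex.I * pdy f τ) / 2)

/-- The open upper half-plane as a subset of `ℂ`. -/
def UHP : Set ℂ := {τ : ℂ | 0 < τ.im}

/-- The upper incomplete gamma function `Γ(s,x) = ∫_x^∞ t^{s-1} e^{-t} dt`. -/
noncomputable def uGamma (s x : ℝ) : ℝ := ∫ t in Set.Ioi x, t ^ (s - 1) * Real.exp (-t)

/-!
Write `h(z) = φ(im z) e^{cz}`. Then `∂ₓ` multiplies by `c` and `∂_y` replaces `φ` by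
`φ' + icφ`, so `Δ_k h = -(y²(φ'' + 2icφ') + kyφ') e^{cz}`: only `φ'` and `φ''` survive. For
`φ(y) = Γ(1-k, ay)` with `a = -4πn > 0` one has `φ'(y) = -a (ay)^{-k} e^{-ay}`, hence
`yφ'' = -(k + ay)φ'`, and since `2ic = a` for `c = 2πin` the bracket vanishes.
-/

open MeasureTheory Set Topology

lemma continuousAt_uGamma_integrand (s : ℝ) {t : ℝ} (ht : t ≠ 0) :
    ContinuousAt (fun t : ℝ => t ^ (s - 1) * Real.exp (-t)) t :=
  (continuousAt_rpow_const t _ (Or.inl ht)).mul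
    (Real.continuous_exp.comp continuous_neg).continuousAt

lemma integrableOn_uGamma_integrand (s : ℝ) {c : ℝ} (hc : 0 < c) :
    IntegrableOn (fun t : ℝ => t ^ (s - 1) * Real.exp (-t)) (Ioi c) :=
  integrable_of_isBigO_exp_neg one_half_pos
    (fun t ht => (continuousAt_uGamma_integrand s (hc.trans_le ht).ne').continuousWithinAt)
    (by simpa only [mul_comm] using (Real.Gamma_integrand_isLittleO (s - 1)).isBigO)

lemma hasDerivAt_uGamma (s : ℝ) {x : ℝ} (hx : 0 < x) :
    HasDerivAt (uGamma s) (-(x ^ (s - 1) * Real.exp (-x))) x := by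
  have hint := integrableOn_uGamma_integrand s (half_pos hx)
  have hftc := intervalIntegral.integral_hasDerivAt_right
    ((intervalIntegrable_iff_integrableOn_Ioc_of_le (half_le_self hx.le)).2
      (hint.mono_set Ioc_subset_Ioi_self))
    (ContinuousAt.stronglyMeasurableAtFilter isOpen_Ioi
      (fun t ht => continuousAt_uGamma_integrand s (ne_of_gt ht)) x hx)
    (continuousAt_uGamma_integrand s hx.ne')
  refine (hftc.const_sub (uGamma s (x / 2))).congr_of_eventuallyEq ?_
  filter_upwards [Ioi_mem_nhds (half_lt_self hx)] with u hu
  rw [uGamma, uGamma, ← intervalIntegral.integral_Ioi_sub_Ioi hint hu.le, sub_sub_cancel]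

lemma hasDerivAt_uGamma_integrand (s : ℝ) {t : ℝ} (ht : 0 < t) :
    HasDerivAt (fun t : ℝ => t ^ (s - 1) * Real.exp (-t))
      (((s - 1) / t - 1) * (t ^ (s - 1) * Real.exp (-t))) t := by
  refine ((hasDerivAt_rpow_const (Or.inl ht.ne')).mul (hasDerivAt_neg t).exp).congr_deriv ?_
  rw [Real.rpow_sub_one ht.ne' (s - 1)]
  field_simp
  ring

lemma hasDerivAt_uGamma_comp_mul (s a : ℝ) {t : ℝ} (h : 0 < a * t) :
    HasDerivAt (fun t : ℝ => uGamma s (a * t))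
      (-a * ((a * t) ^ (s - 1) * Real.exp (-(a * t)))) t :=
  ((hasDerivAt_uGamma s h).comp t ((hasDerivAt_id t).const_mul a)).congr_deriv (by ring)

section ImMulExp

variable {φ : ℝ → ℂ} {φ' : ℂ} {c z : ℂ}

lemma fderiv_im_mul_exp_apply (hφ : HasDerivAt φ φ' z.im) (v : ℂ) :
    fderiv ℝ (fun w : ℂ => φ w.im * Complex.exp (c * w)) z v =
      (φ' * v.im + φ z.im * c * v) * Complex.exp (c * z) := by
  have hexp : HasDerivAt (fun w : ℂ => Complex.exp (c * w)) (Complex.exp (c * z) * c) z := by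
    simpa using ((hasDerivAt_id z).const_mul c).cexp
  have hF : HasFDerivAt (fun w : ℂ => φ w.im * Complex.exp (c * w)) _ z :=
    (hφ.hasFDerivAt.comp z Complex.imCLM.hasFDerivAt).mul (hexp.hasFDerivAt.restrictScalars ℝ)
  rw [hF.fderiv]
  simp only [add_apply, smul_apply,
    ContinuousLinearMap.coe_restrictScalars', ContinuousLinearMap.toSpanSingleton_apply,
    ContinuousLinearMap.comp_apply, Function.comp_apply, imCLM_apply, smul_eq_mul, real_smul]
  ring

lemma pdx_im_mul_exp (hφ : HasDerivAt φ φ' z.im) :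
    pdx (fun w : ℂ => φ w.im * Complex.exp (c * w)) z = c * φ z.im * Complex.exp (c * z) := by
  rw [pdx, fderiv_im_mul_exp_apply hφ, one_im, ofReal_zero]
  ring

lemma pdy_im_mul_exp (hφ : HasDerivAt φ φ' z.im) :
    pdy (fun w : ℂ => φ w.im * Complex.exp (c * w)) z =
      (φ' + c * Complex.I * φ z.im) * Complex.exp (c * z) := by
  rw [pdy, fderiv_im_mul_exp_apply hφ, I_im, ofReal_one]
  ring

end ImMulExp

lemma Filter.EventuallyEq.pdx_eq {f g : ℂ → ℂ} {z : ℂ} (h : f =ᶠ[𝓝 z] g) :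
    pdx f z = pdx g z := by
  rw [pdx, pdx, h.fderiv_eq]

lemma Filter.EventuallyEq.pdy_eq {f g : ℂ → ℂ} {z : ℂ} (h : f =ᶠ[𝓝 z] g) :
    pdy f z = pdy g z := by
  rw [pdy, pdy, h.fderiv_eq]

lemma hypLap_im_mul_exp (k : ℝ) {φ φ' : ℝ → ℂ} {φ'' c τ : ℂ}
    (hφ : ∀ᶠ t in 𝓝 τ.im, HasDerivAt φ (φ' t) t) (hφ' : HasDerivAt φ' φ'' τ.im) :
    hypLap k (fun w : ℂ => φ w.im * Complex.exp (c * w)) τ =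
      -(τ.im ^ 2 * (φ'' + 2 * c * Complex.I * φ' τ.im) + k * τ.im * φ' τ.im) *
        Complex.exp (c * τ) := by
  have hnear : ∀ᶠ w in 𝓝 τ, HasDerivAt φ (φ' w.im) w.im :=
    Complex.continuous_im.continuousAt.eventually hφ
  have hxx : pdx (pdx fun w : ℂ => φ w.im * Complex.exp (c * w)) τ =
      c * (c * φ τ.im) * Complex.exp (c * τ) := by
    have hpdx : (pdx fun w : ℂ => φ w.im * Complex.exp (c * w)) =ᶠ[𝓝 τ]
        fun w => (c * φ w.im) * Complex.exp (c * w) := by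
      filter_upwards [hnear] with w hw
      rw [pdx_im_mul_exp hw]
    rw [hpdx.pdx_eq, pdx_im_mul_exp (hφ.self_of_nhds.const_mul c)]
  have hyy : pdy (pdy fun w : ℂ => φ w.im * Complex.exp (c * w)) τ =
      (φ'' + c * Complex.I * φ' τ.im + c * Complex.I * (φ' τ.im + c * Complex.I * φ τ.im)) *
        Complex.exp (c * τ) := by
    have hpdy : (pdy fun w : ℂ => φ w.im * Complex.exp (c * w)) =ᶠ[𝓝 τ]
        fun w => (φ' w.im + c * Complex.I * φ w.im) * Complex.exp (c * w) := by
      filter_upwards [hnear] with w hw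
      rw [pdy_im_mul_exp hw]
    rw [hpdy.pdy_eq]
    exact pdy_im_mul_exp (φ := fun t => φ' t + c * Complex.I * φ t)
      (hφ'.add (hφ.self_of_nhds.const_mul (c * Complex.I)))
  rw [hypLap, hxx, hyy, pdx_im_mul_exp hφ.self_of_nhds, pdy_im_mul_exp hφ.self_of_nhds]
  linear_combination (-(τ.im : ℂ) ^ 2 * c ^ 2 * φ τ.im + k * τ.im * φ' τ.im +
    Complex.I * k * τ.im * c * φ τ.im) * Complex.exp (c * τ) * Complex.I_sq

/-- For `n` a negative integer and `k ∈ ℝ`, the function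
`h(τ) = Γ(1-k, -4πny) e^{2πinτ}` is annihilated by the weight `k` hyperbolic
Laplacian on the upper half-plane. -/
theorem hypLap_incGamma_term (k : ℝ) (n : ℤ) (hn : n < 0) (τ : ℂ) (hτ : τ ∈ UHP) :
    hypLap k (fun z : ℂ =>
        ((uGamma (1 - k) (-4 * Real.pi * (n : ℝ) * z.im) : ℝ) : ℂ) *
          Complex.exp (2 * Real.pi * Complex.I * (n : ℂ) * z)) τ = 0 := by
  set a : ℝ := -4 * Real.pi * n
  set ω : ℝ → ℝ := fun t => t ^ (1 - k - 1) * Real.exp (-t)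
  have ha : 0 < a := mul_pos_of_neg_of_neg (by linarith [Real.pi_pos]) (by exact_mod_cast hn)
  have hy : 0 < τ.im := hτ
  have hφ : ∀ᶠ t in 𝓝 τ.im, HasDerivAt (fun t => ((uGamma (1 - k) (a * t) : ℝ) : ℂ))
      ((-a * ω (a * t) : ℝ) : ℂ) t := by
    filter_upwards [Ioi_mem_nhds hy] with t ht
    exact (hasDerivAt_uGamma_comp_mul (1 - k) a (mul_pos ha ht)).ofReal_comp
  have hφ' : HasDerivAt (fun t => ((-a * ω (a * t) : ℝ) : ℂ))
      ((-a * (((1 - k - 1) / (a * τ.im) - 1) * ω (a * τ.im) * a) : ℝ) : ℂ) τ.im :=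
    ((((hasDerivAt_uGamma_integrand (1 - k) (mul_pos ha hy)).comp τ.im
      ((hasDerivAt_id τ.im).const_mul a)).congr_deriv (by ring)).const_mul (-a)).ofReal_comp
  rw [hypLap_im_mul_exp k hφ hφ']
  have hca : 2 * (2 * Real.pi * Complex.I * n) * Complex.I = (a : ℂ) := by
    push_cast [a]
    linear_combination 4 * Real.pi * n * Complex.I_sq
  have ha' : (a : ℂ) ≠ 0 := by exact_mod_cast ha.ne'
  have hy' : (τ.im : ℂ) ≠ 0 := by exact_mod_cast hy.ne'
  rw [hca]
  push_cast
  field_simp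
  ring
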